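/- arXiv:1612.06133 — 2 statements merged into one kernel-verified Lean document; each statement's English description precedes it below -/
import Mathlib

section
/- For every π ∈ ℝ^N one has Φ(π) ≤ Φ(π*), i.e. π* maximizes Φ over ℝ^N, and the maximum value equals Φ(π*) = p·β − (γ/(1−γ))·p σ_z Σ⁻¹ Γ + (γ/(2(1−γ)))·p σ_z σ_z^⊤ p^⊤ + (γ/(2(1−γ)))·Γ_z^⊤ (Σ^⊤Σ)⁻¹ Γ_z. (This is the first-order-condition derivation of the optimal feedback investment strategy and of the optimized Hamiltonian Φ*.) -/
/-!
Since `Σ` is diagonal, `Φ` splits as `p ⬝ β` plus a sum over the assets of the concave quadratics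
`γ cᵢ xᵢ - γ (1 - γ) ϑᵢ² xᵢ² / 2` in `xᵢ = (1 - zᵢ) πᵢ`, where `c = Σ σᵀ pᵀ - Γ`. Each is maximal at
its vertex `xᵢ = cᵢ / ((1 - γ) ϑᵢ²)`, which is the `i`-th coordinate of `π*` when asset `i` is not in
distress, with value `γ cᵢ² / (2 (1 - γ) ϑᵢ²)`; distressed assets contribute nothing. Expanding
`cᵢ² = ϑᵢ² (σᵀ pᵀ)ᵢ² - 2 ϑᵢ (σᵀ pᵀ)ᵢ Γᵢ + Γᵢ²` and summing gives the three terms of `Φ(π*)`.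
-/

open Matrix Finset

section MatrixAlgebra

variable {m n : Type*} [Fintype m] [Fintype n]

lemma dotProduct_mul_transpose_mulVec (p : m → ℝ) (A : Matrix m n ℝ) :
    p ⬝ᵥ ((A * Aᵀ) *ᵥ p) = (p ᵥ* A) ⬝ᵥ (p ᵥ* A) := by
  rw [← mulVec_mulVec, dotProduct_mulVec, mulVec_transpose]

variable [DecidableEq n]

lemma inv_diagonal_of_ne_zero {d : n → ℝ} (hd : ∀ i, d i ≠ 0) :
    (diagonal d)⁻¹ = diagonal d⁻¹ := by
  refine inv_eq_right_inv ?_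
  rw [diagonal_mul_diagonal, ← diagonal_one]
  congr 1
  ext i
  simp [hd i]

lemma dotProduct_diagonal_mulVec (d x y : n → ℝ) :
    x ⬝ᵥ (diagonal d *ᵥ y) = ∑ i, d i * x i * y i := by
  simp only [dotProduct, mulVec_diagonal]
  exact sum_congr rfl fun i _ => by ring

lemma dotProduct_mul_diagonal_mulVec (p : m → ℝ) (A : Matrix m n ℝ) (d y : n → ℝ) :
    p ⬝ᵥ ((A * diagonal d) *ᵥ y) = ∑ i, (p ᵥ* A) i * d i * y i := by
  rw [dotProduct_mulVec, ← vecMul_vecMul]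
  simp only [dotProduct, vecMul_diagonal]

end MatrixAlgebra

lemma mul_sub_half_mul_sq_le {a : ℝ} (ha : 0 < a) (b x : ℝ) :
    b * x - a / 2 * x ^ 2 ≤ b ^ 2 / (2 * a) := by
  have hsq : b ^ 2 / (2 * a) - (b * x - a / 2 * x ^ 2) = a / 2 * (x - b / a) ^ 2 := by
    field_simp
    ring
  nlinarith [mul_nonneg (half_pos ha).le (sq_nonneg (x - b / a))]

lemma mul_div_sub_half_mul_sq_div {a : ℝ} (ha : a ≠ 0) (b : ℝ) :
    b * (b / a) - a / 2 * (b / a) ^ 2 = b ^ 2 / (2 * a) := by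
  field_simp
  ring

section Separable

variable {n : Type*} [Fintype n] {w a b : n → ℝ}

lemma sum_quadratic_le (hw : ∀ i, w i = 0 ∨ w i = 1) (ha : ∀ i, 0 < a i) (x : n → ℝ) :
    ∑ i, (b i * (w i * x i) - a i / 2 * (w i * x i) ^ 2) ≤ ∑ i, w i * (b i ^ 2 / (2 * a i)) := by
  refine sum_le_sum fun i _ => ?_
  rcases hw i with h | h <;> simp only [h, zero_mul, one_mul, mul_zero]
  · simp
  · exact mul_sub_half_mul_sq_le (ha i) _ _

lemma sum_quadratic_eq_of_vertex (hw : ∀ i, w i = 0 ∨ w i = 1) (ha : ∀ i, a i ≠ 0)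
    {x : n → ℝ} (hx : ∀ i, w i = 1 → x i = b i / a i) :
    ∑ i, (b i * (w i * x i) - a i / 2 * (w i * x i) ^ 2) = ∑ i, w i * (b i ^ 2 / (2 * a i)) := by
  refine sum_congr rfl fun i _ => ?_
  rcases hw i with h | h
  · simp [h]
  · rw [h, hx i h, one_mul, one_mul, mul_div_sub_half_mul_sq_div (ha i)]

end Separable

section Hamiltonian

variable {m n : Type*} [Fintype m] [Fintype n] [DecidableEq n]
  (γ : ℝ) (ϑ : n → ℝ) (σ : Matrix m n ℝ) (p β : m → ℝ) (Γ w : n → ℝ)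

/-- `Φ` with the distress indicator entering through the weights `w = 1 - z`. -/
noncomputable def hamiltonian (π : n → ℝ) : ℝ :=
  p ⬝ᵥ (β + γ • ((σ * (diagonal ϑ)ᵀ) *ᵥ (w * π))) - γ * ((w * π) ⬝ᵥ Γ)
    - γ * (1 - γ) / 2 * ((w * π) ⬝ᵥ (((diagonal ϑ)ᵀ * diagonal ϑ) *ᵥ (w * π)))

noncomputable def optimalStrategy : n → ℝ :=
  (1 / (1 - γ)) • (w * (((diagonal ϑ)ᵀ * diagonal ϑ)⁻¹ *ᵥ (diagonal ϑ *ᵥ (σᵀ *ᵥ p) - Γ)))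

lemma hamiltonian_eq_sum (π : n → ℝ) :
    hamiltonian γ ϑ σ p β Γ w π = p ⬝ᵥ β + ∑ i, (γ * (ϑ i * (p ᵥ* σ) i - Γ i) * (w i * π i)
      - γ * (1 - γ) * ϑ i ^ 2 / 2 * (w i * π i) ^ 2) := by
  simp only [hamiltonian, diagonal_transpose, diagonal_mul_diagonal, dotProduct_add,
    dotProduct_smul, smul_eq_mul, dotProduct_mul_diagonal_mulVec, dotProduct_diagonal_mulVec]
  simp only [dotProduct, Pi.mul_apply, mul_sum, ← sum_sub_distrib, add_sub_assoc]
  congr 1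
  refine sum_congr rfl fun i _ => ?_
  ring

variable {γ ϑ w}

lemma optimalStrategy_apply_of_eq_one (hγ : γ ≠ 0) (hϑ : ∀ i, ϑ i ≠ 0) {i : n} (hi : w i = 1) :
    optimalStrategy γ ϑ σ p Γ w i = γ * (ϑ i * (p ᵥ* σ) i - Γ i) / (γ * (1 - γ) * ϑ i ^ 2) := by
  rw [optimalStrategy, diagonal_transpose, diagonal_mul_diagonal,
    inv_diagonal_of_ne_zero fun i => mul_ne_zero (hϑ i) (hϑ i)]
  simp only [ Pi.smul_apply, Pi.mul_apply, smul_eq_mul, mulVec_diagonal,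
    Pi.sub_apply, mulVec_transpose, Pi.inv_apply, hi]
  field_simp

lemma hamiltonian_optimalStrategy_eq_sum (hw : ∀ i, w i = 0 ∨ w i = 1) (hγ : γ ≠ 0) (hγ1 : γ ≠ 1)
    (hϑ : ∀ i, ϑ i ≠ 0) :
    hamiltonian γ ϑ σ p β Γ w (optimalStrategy γ ϑ σ p Γ w) = p ⬝ᵥ β
      + ∑ i, w i * ((γ * (ϑ i * (p ᵥ* σ) i - Γ i)) ^ 2 / (2 * (γ * (1 - γ) * ϑ i ^ 2))) := by
  have ha i : γ * (1 - γ) * ϑ i ^ 2 ≠ 0 :=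
    mul_ne_zero (mul_ne_zero hγ (sub_ne_zero.2 hγ1.symm)) (pow_ne_zero 2 (hϑ i))
  rw [hamiltonian_eq_sum, sum_quadratic_eq_of_vertex hw ha
    fun i hi => optimalStrategy_apply_of_eq_one σ p Γ hγ hϑ hi]

lemma hamiltonian_le_optimalStrategy (hw : ∀ i, w i = 0 ∨ w i = 1) (hγ : γ ∈ Set.Ioo 0 1)
    (hϑ : ∀ i, 0 < ϑ i) (π : n → ℝ) :
    hamiltonian γ ϑ σ p β Γ w π ≤ hamiltonian γ ϑ σ p β Γ w (optimalStrategy γ ϑ σ p Γ w) := by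
  obtain ⟨hγ0, hγ1⟩ := hγ
  have ha i : 0 < γ * (1 - γ) * ϑ i ^ 2 := by
    have := hϑ i
    have : 0 < 1 - γ := sub_pos.2 hγ1
    positivity
  rw [hamiltonian_optimalStrategy_eq_sum σ p β Γ hw hγ0.ne' hγ1.ne fun i => (hϑ i).ne',
    hamiltonian_eq_sum, add_le_add_iff_left]
  exact sum_quadratic_le hw ha π

lemma hamiltonian_optimalStrategy (hw : ∀ i, w i = 0 ∨ w i = 1) (hγ : γ ≠ 0) (hγ1 : γ ≠ 1)
    (hϑ : ∀ i, ϑ i ≠ 0) :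
    let σw : Matrix m n ℝ := of fun k i => σ k i * w i
    hamiltonian γ ϑ σ p β Γ w (optimalStrategy γ ϑ σ p Γ w) =
      p ⬝ᵥ β - γ / (1 - γ) * (p ⬝ᵥ ((σw * (diagonal ϑ)⁻¹) *ᵥ Γ))
        + γ / (2 * (1 - γ)) * (p ⬝ᵥ ((σw * σwᵀ) *ᵥ p))
        + γ / (2 * (1 - γ)) * ((w * Γ) ⬝ᵥ (((diagonal ϑ)ᵀ * diagonal ϑ)⁻¹ *ᵥ (w * Γ))) := by
  intro σw
  have hσw : σw = σ * diagonal w := by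
    ext k i
    simp [σw, mul_diagonal]
  rw [hamiltonian_optimalStrategy_eq_sum σ p β Γ hw hγ hγ1 hϑ, hσw,
    dotProduct_mul_transpose_mulVec, ← vecMul_vecMul, inv_diagonal_of_ne_zero hϑ, Matrix.mul_assoc,
    diagonal_mul_diagonal, dotProduct_mul_diagonal_mulVec, diagonal_transpose, diagonal_mul_diagonal,
    inv_diagonal_of_ne_zero fun i => mul_ne_zero (hϑ i) (hϑ i), dotProduct_diagonal_mulVec,
    show ∀ a y z v : ℝ, a - y + z + v = a + (z + v - y) from fun _ _ _ _ => by ring,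
    add_right_inj]
  simp only [dotProduct, vecMul_diagonal, mul_sum, Pi.inv_apply, Pi.mul_apply]
  rw [← sum_add_distrib, ← sum_sub_distrib]
  refine sum_congr rfl fun i _ => ?_
  have := hϑ i
  have : 1 - γ ≠ 0 := sub_ne_zero.2 hγ1.symm
  rcases hw i with h | h
  · simp [h]
  · rw [h]
    field_simp
    ring

end Hamiltonian

theorem stmt_6_general (N K : ℕ)
    (γ : ℝ) (hγ : γ ∈ Set.Ioo (0:ℝ) 1)
    (ϑ : Fin N → ℝ) (hϑ : ∀ i, 0 < ϑ i)
    (σ : Matrix (Fin (K - 1)) (Fin N) ℝ)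
    (p β : Fin (K - 1) → ℝ) (Γ : Fin N → ℝ)
    (z : Fin N → ℝ) (hz : ∀ i, z i = 0 ∨ z i = 1) :
    let S : Matrix (Fin N) (Fin N) ℝ := Matrix.diagonal ϑ
    let zv : (Fin N → ℝ) → Fin N → ℝ := fun v i => (1 - z i) * v i
    let σz : Matrix (Fin (K - 1)) (Fin N) ℝ := Matrix.of fun k i => σ k i * (1 - z i)
    let Φ : (Fin N → ℝ) → ℝ := fun π =>
      p ⬝ᵥ (β + γ • ((σ * S.transpose) *ᵥ zv π)) - γ * (zv π ⬝ᵥ Γ)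
        - (γ * (1 - γ) / 2) * (zv π ⬝ᵥ ((S.transpose * S) *ᵥ zv π))
    let πstar : Fin N → ℝ :=
      (1 / (1 - γ)) • zv ((S.transpose * S)⁻¹ *ᵥ (S *ᵥ (σ.transpose *ᵥ p) - Γ))
    (∀ π : Fin N → ℝ, Φ π ≤ Φ πstar) ∧
    Φ πstar = p ⬝ᵥ β - (γ / (1 - γ)) * (p ⬝ᵥ ((σz * S⁻¹) *ᵥ Γ))
      + (γ / (2 * (1 - γ))) * (p ⬝ᵥ ((σz * σz.transpose) *ᵥ p))
      + (γ / (2 * (1 - γ))) * (zv Γ ⬝ᵥ ((S.transpose * S)⁻¹ *ᵥ zv Γ)) := by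
  intro S zv σz Φ πstar
  have hw i : 1 - z i = 0 ∨ 1 - z i = 1 := by
    rcases hz i with h | h <;> simp [h]
  exact ⟨hamiltonian_le_optimalStrategy σ p β Γ hw hγ hϑ,
    hamiltonian_optimalStrategy σ p β Γ hw hγ.1.ne' hγ.2.ne fun i => (hϑ i).ne'⟩

/-- First-order-condition derivation of the optimal feedback strategy `π*` and of the
optimized Hamiltonian `Φ* = Φ(π*)`. -/
theorem stmt_6 (N K : ℕ) (hN : 1 ≤ N) (hK : 2 ≤ K)
    (γ : ℝ) (hγ : γ ∈ Set.Ioo (0:ℝ) 1)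
    (ϑ : Fin N → ℝ) (hϑ : ∀ i, 0 < ϑ i)
    (σ : Matrix (Fin (K - 1)) (Fin N) ℝ)
    (p β : Fin (K - 1) → ℝ) (Γ : Fin N → ℝ)
    (z : Fin N → ℝ) (hz : ∀ i, z i = 0 ∨ z i = 1) :
    let S : Matrix (Fin N) (Fin N) ℝ := Matrix.diagonal ϑ
    let zv : (Fin N → ℝ) → Fin N → ℝ := fun v i => (1 - z i) * v i
    let σz : Matrix (Fin (K - 1)) (Fin N) ℝ := Matrix.of fun k i => σ k i * (1 - z i)
    let Φ : (Fin N → ℝ) → ℝ := fun π =>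
      p ⬝ᵥ (β + γ • ((σ * S.transpose) *ᵥ zv π)) - γ * (zv π ⬝ᵥ Γ)
        - (γ * (1 - γ) / 2) * (zv π ⬝ᵥ ((S.transpose * S) *ᵥ zv π))
    let πstar : Fin N → ℝ :=
      (1 / (1 - γ)) • zv ((S.transpose * S)⁻¹ *ᵥ (S *ᵥ (σ.transpose *ᵥ p) - Γ))
    (∀ π : Fin N → ℝ, Φ π ≤ Φ πstar) ∧
    Φ πstar = p ⬝ᵥ β - (γ / (1 - γ)) * (p ⬝ᵥ ((σz * S⁻¹) *ᵥ Γ))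
      + (γ / (2 * (1 - γ))) * (p ⬝ᵥ ((σz * σz.transpose) *ᵥ p))
      + (γ / (2 * (1 - γ))) * (zv Γ ⬝ᵥ ((S.transpose * S)⁻¹ *ᵥ zv Γ)) :=
  stmt_6_general N K γ hγ ϑ hϑ σ p β Γ z hz
end

section
/- For every v ∈ ℝ, (d/dv)(ν''(v)/ν'(v)) + ν''(v) = −a k (a+1)·e^{−a k v}/(k⁻¹ + e^{−a k v})², and this quantity is strictly negative. (This identity produces the strictly negative coefficient of the quadratic gradient term in the key estimate of the uniqueness proof.) -/
open Real

/-! With `D v = k⁻¹ + e^{-akv}` one has `ν' = k e^{-akv} / D` and `ν'' = -ak e^{-akv} / D²`,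
so the ratio `ν''/ν'` collapses to `-a / D`. Differentiating once more gives
`-a²k e^{-akv} / D²`, and adding `ν''` yields `-ak(a+1) e^{-akv} / D²`, which is negative
since `D > 0`. -/

lemma hasDerivAt_exp_neg_mul (c v : ℝ) :
    HasDerivAt (fun y => exp (-(c * y))) (-c * exp (-(c * v))) v := by
  have hlin : HasDerivAt (fun y => -(c * y)) (-c) v := by
    simpa using (hasDerivAt_id v).const_mul (-c)
  exact hlin.exp.congr_deriv (mul_comm _ _)

section
variable {a k : ℝ}

lemma inv_add_exp_neg_mul_pos (hk : 0 < k) (v : ℝ) : 0 < k⁻¹ + exp (-(a * k * v)) := by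
  positivity

lemma hasDerivAt_neg_inv_mul_log_inv_add_exp (ha : a ≠ 0) (hk : 0 < k) (v : ℝ) :
    HasDerivAt (fun y => -(1 / a) * log (k⁻¹ + exp (-(a * k * y))))
      (k * exp (-(a * k * v)) / (k⁻¹ + exp (-(a * k * v)))) v := by
  have hD := (inv_add_exp_neg_mul_pos (a := a) hk v).ne'
  have hlog := ((hasDerivAt_exp_neg_mul (a * k) v).const_add k⁻¹).log hD
  refine (hlog.const_mul (-(1 / a))).congr_deriv ?_
  field_simp

lemma hasDerivAt_mul_exp_div_inv_add_exp (hk : 0 < k) (v : ℝ) :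
    HasDerivAt (fun y => k * exp (-(a * k * y)) / (k⁻¹ + exp (-(a * k * y))))
      (-(a * k * exp (-(a * k * v))) / (k⁻¹ + exp (-(a * k * v))) ^ 2) v := by
  have hD := (inv_add_exp_neg_mul_pos (a := a) hk v).ne'
  have hexp := hasDerivAt_exp_neg_mul (a * k) v
  refine ((hexp.const_mul k).div (hexp.const_add k⁻¹) hD).congr_deriv ?_
  field_simp
  ring

lemma hasDerivAt_neg_div_inv_add_exp (hk : 0 < k) (v : ℝ) :
    HasDerivAt (fun y => -a / (k⁻¹ + exp (-(a * k * y))))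
      (-(a ^ 2 * k * exp (-(a * k * v))) / (k⁻¹ + exp (-(a * k * v))) ^ 2) v := by
  have hD := (inv_add_exp_neg_mul_pos (a := a) hk v).ne'
  have hden := (hasDerivAt_exp_neg_mul (a * k) v).const_add k⁻¹
  refine ((hasDerivAt_const v (-a)).div hden hD).congr_deriv ?_
  field_simp
  ring

lemma neg_mul_exp_div_sq_div_mul_exp_div (hk : 0 < k) (v : ℝ) :
    -(a * k * exp (-(a * k * v))) / (k⁻¹ + exp (-(a * k * v))) ^ 2
        / (k * exp (-(a * k * v)) / (k⁻¹ + exp (-(a * k * v))))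
      = -a / (k⁻¹ + exp (-(a * k * v))) := by
  have hD := (inv_add_exp_neg_mul_pos (a := a) hk v).ne'
  field_simp

end

/-- The identity `(ν''/ν')' + ν'' = -ak(a+1)·e^{-akv}/(k⁻¹+e^{-akv})² < 0` for the
transformation `ν(v) = -(1/a)·log(k⁻¹ + e^{-akv})`. -/
theorem stmt_10 (a k : ℝ) (ha : 0 < a) (hk : 0 < k) :
    let ν : ℝ → ℝ := fun v => -(1 / a) * Real.log (k⁻¹ + Real.exp (-(a * k * v)))
    let g : ℝ → ℝ := fun v => deriv (deriv ν) v / deriv ν v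
    ∀ v : ℝ,
      deriv g v + deriv (deriv ν) v
        = -(a * k * (a + 1)) * Real.exp (-(a * k * v))
            / (k⁻¹ + Real.exp (-(a * k * v))) ^ 2 ∧
      deriv g v + deriv (deriv ν) v < 0 := by
  intro ν g v
  have hν' : deriv ν = fun y => k * exp (-(a * k * y)) / (k⁻¹ + exp (-(a * k * y))) :=
    funext fun y => (hasDerivAt_neg_inv_mul_log_inv_add_exp ha.ne' hk y).deriv
  have hν'' : deriv (deriv ν)
      = fun y => -(a * k * exp (-(a * k * y))) / (k⁻¹ + exp (-(a * k * y))) ^ 2 := by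
    rw [hν']
    exact funext fun y => (hasDerivAt_mul_exp_div_inv_add_exp hk y).deriv
  have hg : g = fun y => -a / (k⁻¹ + exp (-(a * k * y))) := by
    funext y
    rw [show g y = deriv (deriv ν) y / deriv ν y from rfl, hν'', hν']
    exact neg_mul_exp_div_sq_div_mul_exp_div hk y
  have hsum : deriv g v + deriv (deriv ν) v
      = -(a * k * (a + 1)) * exp (-(a * k * v)) / (k⁻¹ + exp (-(a * k * v))) ^ 2 := by
    rw [hg, (hasDerivAt_neg_div_inv_add_exp hk v).deriv, hν'']
    ring
  refine ⟨hsum, hsum ▸ ?_⟩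
  have hpos : 0 < a * k * (a + 1) * exp (-(a * k * v)) / (k⁻¹ + exp (-(a * k * v))) ^ 2 := by
    positivity
  simpa only [neg_mul, neg_div] using neg_neg_of_pos hpos
end
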